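/- Let k ≥ 0 and let d₁, d₂ ∈ D be two distinct directions. Suppose a family of lines consists of 5k+1 pairwise disjoint lines in direction d₁ and 5k+1 pairwise disjoint lines in direction d₂. Then the union of these lines contains at least (5k+1)·5 + 4 lattice points. -/

import Mathlib

/-- The four directions of Morpion Solitaire. -/
def Dir : Set (ℤ × ℤ) := {(1, 0), (0, 1), (1, 1), (1, -1)}

/-- The line (segment) of length 5 starting at `q` in direction `d`:
the set `{q + t • d : t ∈ {0,1,2,3,4}}`. -/
def seg (q d : ℤ × ℤ) : Set (ℤ × ℤ) := {p | ∃ t : ℕ, t ≤ 4 ∧ p = q + (t : ℤ) • d}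

/-- The initial configuration of 36 crosses. -/
def S0 : Set (ℤ × ℤ) := {p |
  ((p.2 = 0 ∨ p.2 = 9) ∧ 3 ≤ p.1 ∧ p.1 ≤ 6) ∨
  ((p.1 = 0 ∨ p.1 = 9) ∧ 3 ≤ p.2 ∧ p.2 ≤ 6) ∨
  ((p.1 = 3 ∨ p.1 = 6) ∧ ((0 ≤ p.2 ∧ p.2 ≤ 3) ∨ (6 ≤ p.2 ∧ p.2 ≤ 9))) ∨
  ((p.2 = 3 ∨ p.2 = 6) ∧ ((0 ≤ p.1 ∧ p.1 ≤ 3) ∨ (6 ≤ p.1 ∧ p.1 ≤ 9)))}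

/-- A play of Morpion Solitaire 5D of length `N`: crosses `p i`, and lines
`seg (q i) (d i)` in directions `d i ∈ Dir`, subject to the rules of 5D.
(Index `i : Fin N` corresponds to move `i + 1`.) -/
structure Play (N : ℕ) where
  p : Fin N → ℤ × ℤ
  q : Fin N → ℤ × ℤ
  d : Fin N → ℤ × ℤ
  d_mem : ∀ i, d i ∈ Dir
  /-- rule (1): the new cross is placed on an empty point -/
  p_not_S0 : ∀ i, p i ∉ S0
  p_new : ∀ i j : Fin N, j < i → p j ≠ p i
  /-- rule (2): the new line passes through the new cross -/
  p_mem : ∀ i, p i ∈ seg (q i) (d i)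
  /-- rule (3): the new line passes only through existing crosses -/
  seg_sub : ∀ i, seg (q i) (d i) ⊆ S0 ∪ {x | ∃ j : Fin N, j ≤ i ∧ p j = x}
  /-- rule (4): two lines in the same direction are disjoint -/
  disj : ∀ i j : Fin N, j < i → d j = d i → seg (q i) (d i) ∩ seg (q j) (d j) = ∅

/-!
Pick an additive map `ψ : ℤ² → ℤ/5` with `ψ d₁ = 0` and `ψ d₂ = 1`; it exists because two distinct
directions have determinant `±1` or `±2`, a unit mod 5. A `d₁`-line lies in a single fibre of `ψ`,
so the union `A` of the `d₁`-lines meets every fibre in a multiple of 5 points, while a `d₂`-line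
meets every fibre exactly once, so the union `B` of the `d₂`-lines meets every fibre in
`N = 5k + 1` points. The five fibre counts of `A` sum to `5N` and are `≡ 0 ≢ N (mod 5)`, so some
count exceeds `N`, by at least 4; the excesses are balanced by the deficits `N - #(A ∩ fibre)`,
and these are realised by points of `B \ A`.
-/

open Finset Function

lemma sub_one_le_sum_tsub {ι : Type*} [Fintype ι] {n N : ℕ} (a : ι → ℕ)
    (hcard : Fintype.card ι = n) (hdvd : ∀ i, n ∣ a i) (hsum : ∑ i, a i = n * N)
    (hN : N % n = 1) : n - 1 ≤ ∑ i, (N - a i) := by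
  rcases Nat.eq_zero_or_pos n with rfl | hn
  · exact Nat.zero_le _
  have hbalance : ∑ i, (N - a i) = ∑ i, (a i - N) := by
    have h : ∑ i, ((N - a i) + a i) = ∑ i, ((a i - N) + N) :=
      sum_congr rfl fun i _ => by rw [tsub_add_eq_max, tsub_add_eq_max, max_comm]
    rw [sum_add_distrib, sum_add_distrib, hsum, sum_const, card_univ, hcard, smul_eq_mul] at h
    omega
  obtain ⟨j, hj⟩ : ∃ j, N < a j := by
    by_contra! hle
    obtain ⟨i⟩ : Nonempty ι := Fintype.card_pos_iff.1 (hcard ▸ hn)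
    have heq := (sum_eq_sum_iff_of_le (s := univ) fun i _ => hle i).1
      (by rw [hsum, sum_const, card_univ, hcard, smul_eq_mul])
    have := Nat.mod_eq_zero_of_dvd (heq i (mem_univ i) ▸ hdvd i)
    omega
  have hstep : n ∣ a j - N + 1 := by
    have hN0 : N ≠ 0 := by rintro rfl; simp at hN
    have h := Nat.dvd_sub (hdvd j) (Nat.dvd_sub_mod (n := n) N)
    rwa [hN, show a j - (N - 1) = a j - N + 1 by omega] at h
  calc n - 1 ≤ a j - N := by have := Nat.le_of_dvd (by omega) hstep; omega
    _ ≤ ∑ i, (a i - N) :=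
      single_le_sum (f := fun i => a i - N) (fun i _ => Nat.zero_le _) (mem_univ j)
    _ = ∑ i, (N - a i) := hbalance.symm

lemma ne_zero_of_mem_Dir {d : ℤ × ℤ} (hd : d ∈ Dir) : d ≠ 0 := by
  simp only [Dir, Set.mem_insert_iff, Set.mem_singleton_iff] at hd
  rcases hd with rfl | rfl | rfl | rfl <;> decide

lemma det_ne_zero_of_mem_Dir {d₁ d₂ : ℤ × ℤ} (hd₁ : d₁ ∈ Dir) (hd₂ : d₂ ∈ Dir) (hne : d₁ ≠ d₂) :
    ((d₁.1 * d₂.2 - d₁.2 * d₂.1 : ℤ) : ZMod 5) ≠ 0 := by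
  simp only [Dir, Set.mem_insert_iff, Set.mem_singleton_iff] at hd₁ hd₂
  rcases hd₁ with rfl | rfl | rfl | rfl <;> rcases hd₂ with rfl | rfl | rfl | rfl <;>
    first | exact absurd rfl hne | decide

lemma exists_addMonoidHom_map_eq_zero_map_eq_one {K : Type*} [Field K] {d₁ d₂ : ℤ × ℤ}
    (hdet : ((d₁.1 * d₂.2 - d₁.2 * d₂.1 : ℤ) : K) ≠ 0) :
    ∃ ψ : ℤ × ℤ →+ K, ψ d₁ = 0 ∧ ψ d₂ = 1 := by
  refine ⟨AddMonoidHom.mk' (fun p => ((d₁.1 * d₂.2 - d₁.2 * d₂.1 : ℤ) : K)⁻¹ *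
      ((d₁.1 * p.2 - d₁.2 * p.1 : ℤ) : K)) fun p p' => ?_, ?_, ?_⟩
  · simp only [Prod.fst_add, Prod.snd_add]
    push_cast
    ring
  · simp [mul_comm]
  · exact inv_mul_cancel₀ hdet

def segFinset (q d : ℤ × ℤ) : Finset (ℤ × ℤ) := (range 5).image fun t : ℕ => q + (t : ℤ) • d

lemma coe_segFinset (q d : ℤ × ℤ) : (segFinset q d : Set (ℤ × ℤ)) = seg q d := by
  ext p
  simp only [segFinset, coe_image, coe_range, Set.mem_image, Set.mem_Iio, seg, Set.mem_ofPred_eq,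
    Nat.lt_succ_iff, eq_comm]

lemma injective_add_smul {q d : ℤ × ℤ} (hd : d ≠ 0) :
    Injective fun t : ℕ => q + (t : ℤ) • d :=
  (add_right_injective q).comp ((smul_left_injective ℤ hd).comp Nat.cast_injective)

lemma card_segFinset (q : ℤ × ℤ) {d : ℤ × ℤ} (hd : d ≠ 0) : #(segFinset q d) = 5 := by
  rw [segFinset, card_image_of_injective _ (injective_add_smul hd), card_range]

section LinearForm

variable (ψ : ℤ × ℤ →+ ZMod 5)

lemma five_dvd_card_filter_segFinset {d : ℤ × ℤ} (hd : d ≠ 0) (hψ : ψ d = 0) (q : ℤ × ℤ)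
    (ρ : ZMod 5) : 5 ∣ #{p ∈ segFinset q d | ψ p = ρ} := by
  have hconst : ∀ p ∈ segFinset q d, ψ p = ψ q := by
    simp only [segFinset, mem_image]
    rintro _ ⟨t, -, rfl⟩
    rw [map_add, map_zsmul, hψ, smul_zero, add_zero]
  by_cases hq : ψ q = ρ
  · rw [filter_true_of_mem fun p hp => (hconst p hp).trans hq, card_segFinset q hd]
  · rw [filter_false_of_mem fun p hp => (hconst p hp).trans_ne hq, card_empty]
    exact dvd_zero 5

lemma card_filter_segFinset_eq_one {d : ℤ × ℤ} (hψ : ψ d = 1) (q : ℤ × ℤ) (ρ : ZMod 5) :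
    #{p ∈ segFinset q d | ψ p = ρ} = 1 := by
  have hd : d ≠ 0 := by rintro rfl; exact absurd ((map_zero ψ).symm.trans hψ) (by decide)
  rw [segFinset, filter_image, card_image_of_injective _ (injective_add_smul hd)]
  simp only [map_add, map_zsmul, hψ, zsmul_one, Int.cast_natCast]
  generalize ψ q = a
  revert a ρ
  decide

end LinearForm

def lines {ι : Type*} [Fintype ι] (q : ι → ℤ × ℤ) (d : ℤ × ℤ) : Finset (ℤ × ℤ) :=
  univ.biUnion fun i => segFinset (q i) d

section Lines

variable {ι : Type*} {q : ι → ℤ × ℤ} {d : ℤ × ℤ}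

lemma pairwise_disjoint_segFinset (hdisj : ∀ i j, i ≠ j → seg (q i) d ∩ seg (q j) d = ∅) :
    Pairwise (Disjoint on fun i => segFinset (q i) d) := fun i j hij => by
  rw [onFun, ← disjoint_coe, coe_segFinset, coe_segFinset,
    Set.disjoint_iff_inter_eq_empty]
  exact hdisj i j hij

variable [Fintype ι]

lemma coe_lines (q : ι → ℤ × ℤ) (d : ℤ × ℤ) :
    (lines q d : Set (ℤ × ℤ)) = ⋃ i, seg (q i) d := by
  simp [lines, coe_segFinset]

lemma card_lines (hd : d ≠ 0) (hdisj : ∀ i j, i ≠ j → seg (q i) d ∩ seg (q j) d = ∅) :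
    #(lines q d) = Fintype.card ι * 5 := by
  rw [lines, card_biUnion ((pairwise_disjoint_segFinset hdisj).set_pairwise _)]
  simp [card_segFinset _ hd]

lemma card_filter_lines (hdisj : ∀ i j, i ≠ j → seg (q i) d ∩ seg (q j) d = ∅)
    (P : ℤ × ℤ → Prop) [DecidablePred P] :
    #{p ∈ lines q d | P p} = ∑ i, #{p ∈ segFinset (q i) d | P p} := by
  rw [lines, filter_biUnion, card_biUnion]
  exact fun i hi j hj hij =>
    disjoint_filter_filter (pairwise_disjoint_segFinset hdisj hij)

end Lines

/-- If `5k+1` pairwise disjoint lines of length `5` are drawn in each of two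
distinct directions, then together they cover at least `(5k+1)·5 + 4`
lattice points. -/
theorem two_direction_cover (k : ℕ) (d₁ d₂ : ℤ × ℤ) (hd₁ : d₁ ∈ Dir)
    (hd₂ : d₂ ∈ Dir) (hne : d₁ ≠ d₂) (q₁ q₂ : Fin (5 * k + 1) → ℤ × ℤ)
    (hdisj₁ : ∀ i j, i ≠ j → seg (q₁ i) d₁ ∩ seg (q₁ j) d₁ = ∅)
    (hdisj₂ : ∀ i j, i ≠ j → seg (q₂ i) d₂ ∩ seg (q₂ j) d₂ = ∅) :
    (5 * k + 1) * 5 + 4 ≤ ((⋃ i, seg (q₁ i) d₁) ∪ ⋃ i, seg (q₂ i) d₂).ncard := by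
  have : Fact (Nat.Prime 5) := ⟨Nat.prime_five⟩
  obtain ⟨ψ, hψ₁, hψ₂⟩ :=
    exists_addMonoidHom_map_eq_zero_map_eq_one (det_ne_zero_of_mem_Dir hd₁ hd₂ hne)
  set A := lines q₁ d₁
  set B := lines q₂ d₂
  have hA : #A = (5 * k + 1) * 5 := by simpa using card_lines (ne_zero_of_mem_Dir hd₁) hdisj₁
  have hA_fiber (ρ : ZMod 5) : 5 ∣ #{p ∈ A | ψ p = ρ} := by
    rw [card_filter_lines hdisj₁]
    exact dvd_sum fun i _ => five_dvd_card_filter_segFinset ψ (ne_zero_of_mem_Dir hd₁) hψ₁ _ ρ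
  have hB_fiber (ρ : ZMod 5) : #{p ∈ B | ψ p = ρ} = 5 * k + 1 := by
    rw [card_filter_lines hdisj₂]
    simp [card_filter_segFinset_eq_one ψ hψ₂]
  rw [← coe_lines, ← coe_lines, ← coe_union, Set.ncard_coe_finset, union_comm,
    ← card_sdiff_add_card, add_comm, hA]
  gcongr
  calc 4 ≤ ∑ ρ, (5 * k + 1 - #{p ∈ A | ψ p = ρ}) :=
        sub_one_le_sum_tsub _ (ZMod.card 5) hA_fiber
          (by rw [← card_eq_sum_card_fiberwise fun _ _ => mem_univ _, hA, mul_comm]) (by omega)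
    _ ≤ ∑ ρ, #{p ∈ B \ A | ψ p = ρ} := sum_le_sum fun ρ _ => by
        rw [← hB_fiber ρ]
        refine (le_card_sdiff _ _).trans (card_le_card fun p => ?_)
        simp only [mem_sdiff, mem_filter]
        tauto
    _ = #(B \ A) := (card_eq_sum_card_fiberwise fun _ _ => mem_univ _).symm
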